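/- arXiv:1207.6609 — 6 statements merged into one kernel-verified Lean document; each statement's English description precedes it below -/
import Mathlib

section
/- Let a₁, a₂, a₃ be positive real numbers and let M be the 3×3 real matrix with rows (a₂, 1, 0), (a₃, 0, 1), (a₁, 0, 0). Then M has an eigenvalue of absolute value greater than 1 if and only if a₁ + a₂ + a₃ > 1. -/
/-!
The eigenvalues of `M` are the roots of `λ³ = a₂λ² + a₃λ + a₁`. If such a root has modulus
`r > 1`, the triangle inequality gives `r³ ≤ a₂r² + a₃r + a₁ ≤ (a₁ + a₂ + a₃)r²`, so
`1 < r ≤ a₁ + a₂ + a₃`. Conversely, if `a₁ + a₂ + a₃ > 1` the real cubic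
`s³ - a₂s² - a₃s - a₁` is negative at `s = 1` and positive for large `s`, so it has a real
root beyond `1`.
-/

namespace Matrix

theorem hasEigenvalue_toLin'_companion_iff {R : Type*} [CommRing R] [IsDomain R]
    (a b c μ : R) :
    Module.End.HasEigenvalue (toLin' !![b, 1, 0; c, 0, 1; a, 0, 0]) μ ↔
      μ ^ 3 = b * μ ^ 2 + c * μ + a := by
  have hdet : (scalar (Fin 3) μ - !![b, 1, 0; c, 0, 1; a, 0, 0]).det =
      μ ^ 3 - (b * μ ^ 2 + c * μ + a) := by
    simp only [det_fin_three, sub_apply, scalar_apply, diagonal_apply_eq, diagonal_apply_ne, of_apply,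
      cons_val', cons_val_zero, cons_val_one, cons_val_fin_one, cons_val, ne_eq, Fin.reduceEq,
      not_false_eq_true]
    ring
  rw [Module.End.hasEigenvalue_iff_isRoot_charpoly, charpoly_toLin', Polynomial.IsRoot, eval_charpoly, hdet,
    sub_eq_zero]

end Matrix

theorem norm_le_add_add_of_cubic_root {a b c : ℝ} (ha : 0 ≤ a) (hb : 0 ≤ b) (hc : 0 ≤ c) {z : ℂ}
    (hz : z ^ 3 = b * z ^ 2 + c * z + a) (h1 : 1 ≤ ‖z‖) : ‖z‖ ≤ a + b + c := by
  set r := ‖z‖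
  have hcube : r ^ 3 ≤ b * r ^ 2 + c * r + a := by
    calc r ^ 3 = ‖b * z ^ 2 + c * z + a‖ := by rw [← norm_pow, hz]
      _ ≤ ‖(b : ℂ) * z ^ 2‖ + ‖(c : ℂ) * z‖ + ‖(a : ℂ)‖ := norm_add₃_le
      _ = b * r ^ 2 + c * r + a := by
        simp [r, norm_pow, Complex.norm_real, abs_of_nonneg, ha, hb, hc]
  have hr2 : 1 ≤ r ^ 2 := one_le_pow₀ h1
  have hr_le : r ≤ r ^ 2 := by nlinarith
  have hmul : r * r ^ 2 ≤ (a + b + c) * r ^ 2 := by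
    nlinarith [mul_le_mul_of_nonneg_left hr_le hc, mul_le_mul_of_nonneg_left hr2 ha]
  exact le_of_mul_le_mul_right hmul (by positivity)

theorem exists_one_lt_cubic_root {a b c : ℝ} (ha : 0 ≤ a) (hb : 0 ≤ b) (hc : 0 ≤ c)
    (h : 1 < a + b + c) : ∃ t : ℝ, 1 < t ∧ t ^ 3 = b * t ^ 2 + c * t + a := by
  set p : ℝ → ℝ := fun s ↦ s ^ 3 - (b * s ^ 2 + c * s + a)
  set B := 1 + (a + b + c)
  have hB : 0 < p B := by
    simp only [p]; nlinarith [mul_nonneg ha (sq_nonneg (a + b + c))]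
  obtain ⟨t, ⟨ht, -⟩, hpt⟩ :=
    intermediate_value_Ioo (by linarith : (1 : ℝ) ≤ B) (by fun_prop : ContinuousOn p _)
      (⟨by simp only [p]; linarith, hB⟩ : (0 : ℝ) ∈ Set.Ioo (p 1) (p B))
  exact ⟨t, ht, sub_eq_zero.mp hpt⟩

theorem stmt2 (a₁ a₂ a₃ : ℝ) (h₁ : 0 < a₁) (h₂ : 0 < a₂) (h₃ : 0 < a₃) :
    (∃ lam : ℂ,
        Module.End.HasEigenvalue
          (Matrix.toLin' ((!![a₂, 1, 0; a₃, 0, 1; a₁, 0, 0] : Matrix (Fin 3) (Fin 3) ℝ).map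
            Complex.ofReal)) lam ∧ 1 < ‖lam‖) ↔ 1 < a₁ + a₂ + a₃ := by
  have hM : (!![a₂, 1, 0; a₃, 0, 1; a₁, 0, 0] : Matrix (Fin 3) (Fin 3) ℝ).map Complex.ofReal =
      !![(a₂ : ℂ), 1, 0; (a₃ : ℂ), 0, 1; (a₁ : ℂ), 0, 0] := by
    ext i j; fin_cases i <;> fin_cases j <;> simp
  simp_rw [hM, Matrix.hasEigenvalue_toLin'_companion_iff]
  constructor
  · rintro ⟨z, hz, hnorm⟩
    exact hnorm.trans_le (norm_le_add_add_of_cubic_root h₁.le h₂.le h₃.le hz hnorm.le)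
  · intro h
    obtain ⟨t, ht1, ht⟩ := exists_one_lt_cubic_root h₁.le h₂.le h₃.le h
    refine ⟨t, by exact_mod_cast ht, ?_⟩
    rwa [Complex.norm_real, Real.norm_of_nonneg (by linarith)]
end

section
/- Let a₁ > 0, a₂, a₃ be real numbers with a₁ + a₂ + a₃ > 1, a₂a₃ + a₁ > 0, and a₁a₂³ + a₃³ > 0. Suppose the polynomial p(λ) = -λ³ + a₂λ² + a₃λ + a₁ has three real roots λ₁ ≥ λ₂ ≥ λ₃. Then λ₁ > 1, λ₂ < 0, λ₃ < 0, and λ₁ > max(|λ₂|, |λ₃|). -/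
lemma stmt3_aux (X P Q : ℝ) (hX : 0 < X) (hP : 0 < P) (hQ : 0 ≤ Q) :
    0 ≤ P^3*Q^3 + 3*P^4*Q^2 + 3*P^5*Q + P^6 + X*P*Q^4 + 7*X*P^2*Q^3 + 18*X*P^3*Q^2 + 20*X*P^4*Q + 8*X*P^5 + X^2*Q^4 + 11*X^2*P*Q^3 + 36*X^2*P^2*Q^2 + 50*X^2*P^3*Q + 25*X^2*P^4 + 4*X^3*Q^3 + 27*X^3*P*Q^2 + 57*X^3*P^2*Q + 38*X^3*P^3 + 6*X^4*Q^2 + 28*X^4*P*Q + 28*X^4*P^2 + 4*X^5*Q + 8*X^5*P := by positivity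

theorem stmt3 (a₁ a₂ a₃ l₁ l₂ l₃ : ℝ)
    (ha₁ : 0 < a₁)
    (hsum : 1 < a₁ + a₂ + a₃)
    (hprod23 : 0 < a₂ * a₃ + a₁)
    (hcube : 0 < a₁ * a₂ ^ 3 + a₃ ^ 3)
    (hord : l₁ ≥ l₂ ∧ l₂ ≥ l₃)
    (hv1 : l₁ + l₂ + l₃ = a₂)
    (hv2 : l₁ * l₂ + l₂ * l₃ + l₃ * l₁ = -a₃)
    (hv3 : l₁ * l₂ * l₃ = a₁) :
    1 < l₁ ∧ l₂ < 0 ∧ l₃ < 0 ∧ max |l₂| |l₃| < l₁ := by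
  obtain ⟨h12, h23⟩ := hord
  have ha2 : a₂ = l₁ + l₂ + l₃ := hv1.symm
  have ha3 : a₃ = -(l₁ * l₂ + l₂ * l₃ + l₃ * l₁) := by linarith
  have ha1 : a₁ = l₁ * l₂ * l₃ := hv3.symm
  subst ha1 ha2 ha3
  have hl2 : l₂ < 0 := by
    by_contra h
    push_neg at h
    have hl1 : 0 ≤ l₁ := le_trans h h12
    have hl3 : 0 < l₃ := by
      by_contra h3
      push_neg at h3
      have : l₁ * l₂ * l₃ ≤ 0 := mul_nonpos_of_nonneg_of_nonpos (mul_nonneg hl1 h) h3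
      linarith
    have hl2' : 0 < l₂ := lt_of_lt_of_le hl3 h23
    have hl1' : 0 < l₁ := lt_of_lt_of_le hl2' h12
    nlinarith [mul_pos hl1' hl2', mul_pos hl2' hl3, mul_pos hl1' hl3,
      mul_pos (mul_pos hl1' hl2') hl3]
  have hl3 : l₃ < 0 := lt_of_le_of_lt h23 hl2
  have hl1 : 0 < l₁ := by
    nlinarith [mul_pos (neg_pos.mpr hl2) (neg_pos.mpr hl3)]
  have pos2 : 0 < 1 - l₂ := by linarith
  have pos3 : 0 < 1 - l₃ := by linarith
  have h1 : 1 < l₁ := by nlinarith [mul_pos pos2 pos3]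
  have hyz : 0 < -(l₂ + l₃) := by linarith
  have hprod : 0 < (l₁ + l₂) * (l₁ + l₃) := by
    by_contra hp
    push_neg at hp
    nlinarith
  have hl13 : 0 < l₁ + l₃ := by
    by_contra h
    push_neg at h
    have h13 : l₁ + l₃ < 0 := by
      rcases lt_or_eq_of_le h with h' | h'
      · exact h'
      · exfalso; rw [h', mul_zero] at hprod; exact lt_irrefl 0 hprod
    have h12' : l₁ + l₂ < 0 := by
      rcases lt_or_ge (l₁ + l₂) 0 with h' | h'
      · exact h'
      · nlinarith
    have hS := stmt3_aux l₁ (-(l₁ + l₂)) (l₂ - l₃) hl1 (by linarith) (by linarith)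
    have key : l₁ * l₂ * l₃ * (l₁ + l₂ + l₃) ^ 3 + (-(l₁ * l₂ + l₂ * l₃ + l₃ * l₁)) ^ 3
        = -((-(l₁ + l₂))^3*(l₂ - l₃)^3 + 3*(-(l₁ + l₂))^4*(l₂ - l₃)^2 + 3*(-(l₁ + l₂))^5*(l₂ - l₃) + (-(l₁ + l₂))^6 + l₁*(-(l₁ + l₂))*(l₂ - l₃)^4 + 7*l₁*(-(l₁ + l₂))^2*(l₂ - l₃)^3 + 18*l₁*(-(l₁ + l₂))^3*(l₂ - l₃)^2 + 20*l₁*(-(l₁ + l₂))^4*(l₂ - l₃) + 8*l₁*(-(l₁ + l₂))^5 + l₁^2*(l₂ - l₃)^4 + 11*l₁^2*(-(l₁ + l₂))*(l₂ - l₃)^3 + 36*l₁^2*(-(l₁ + l₂))^2*(l₂ - l₃)^2 + 50*l₁^2*(-(l₁ + l₂))^3*(l₂ - l₃) + 25*l₁^2*(-(l₁ + l₂))^4 + 4*l₁^3*(l₂ - l₃)^3 + 27*l₁^3*(-(l₁ + l₂))*(l₂ - l₃)^2 + 57*l₁^3*(-(l₁ + l₂))^2*(l₂ - l₃) + 38*l₁^3*(-(l₁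 + l₂))^3 + 6*l₁^4*(l₂ - l₃)^2 + 28*l₁^4*(-(l₁ + l₂))*(l₂ - l₃) + 28*l₁^4*(-(l₁ + l₂))^2 + 4*l₁^5*(l₂ - l₃) + 8*l₁^5*(-(l₁ + l₂))) := by ring
    rw [key] at hcube
    linarith
  refine ⟨h1, hl2, hl3, ?_⟩
  rw [abs_of_neg hl2, abs_of_neg hl3, max_lt_iff]
  constructor <;> linarith
end

section
/- Let a₁ > 0, a₂, a₃ be real numbers, and suppose the polynomial p(λ) = -λ³ + a₂λ² + a₃λ + a₁ has one real root λ₁ and two complex conjugate roots λ₂ = α + iβ, λ₃ = α - iβ with β ≠ 0. Then a₂a₃ + a₁ = -2α((λ₁ + α)² + β²). In particular, a₂a₃ + a₁ > 0 if and only if α < 0. -/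
theorem stmt4 (a₁ a₂ a₃ l₁ α β : ℝ)
    (ha₁ : 0 < a₁) (hβ : β ≠ 0)
    (hv1 : l₁ + 2 * α = a₂)
    (hv2 : 2 * l₁ * α + α ^ 2 + β ^ 2 = -a₃)
    (hv3 : l₁ * (α ^ 2 + β ^ 2) = a₁) :
    a₂ * a₃ + a₁ = -2 * α * ((l₁ + α) ^ 2 + β ^ 2) ∧
      (0 < a₂ * a₃ + a₁ ↔ α < 0) := by
  have hpos : 0 < (l₁ + α) ^ 2 + β ^ 2 := by positivity
  have heq : a₂ * a₃ + a₁ = -2 * α * ((l₁ + α) ^ 2 + β ^ 2) := by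
    have ha3 : a₃ = -(2 * l₁ * α + α ^ 2 + β ^ 2) := by linarith
    subst hv1 hv3 ha3
    ring
  refine ⟨heq, ?_⟩
  rw [heq]
  constructor
  · intro h
    nlinarith
  · intro h
    nlinarith
end

section
/- Consider the map g: ℝ³ → ℝ³ given by g(w,u,v) = (A·w^{a₁} + |w|^{b}·u, C·u·|w|^{b}, C·v·|w|^{b}), where A, C are real constants, a₁ > 1, and b > 0 (here w^{a₁} denotes sign(w)|w|^{a₁}). Then the fixed point (0,0,0) of g is asymptotically stable: for every δ > 0 there is ε > 0 such that every point x with |x| < ε satisfies |gᵏ(x)| < δ for all k ≥ 0 and gᵏ(x) → 0 as k → ∞. -/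
open Filter Topology

/-!
Near the origin the map is a contraction: with `r = ‖(w, u, v)‖`, each coordinate of the image
is at most `(|A| r^(a₁ - 1) + (1 + |C|) r^b) · r` in absolute value, and since `a₁ > 1` and
`b > 0` the factor tends to `0` with `r`. On a small enough ball the map therefore halves the
sup norm, so its orbits stay in the ball and decay geometrically to the origin.
-/

def IsAsymptoticallyStableAtZero {E : Type*} [SeminormedAddGroup E] (f : E → E) : Prop :=
  ∀ δ > 0, ∃ ε > 0, ∀ x : E, ‖x‖ < ε →
    (∀ k : ℕ, ‖f^[k] x‖ < δ) ∧ Tendsto (fun k : ℕ => f^[k] x) atTop (𝓝 0)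

section Contraction

variable {E : Type*} [SeminormedAddGroup E] {f : E → E} {q r : ℝ}

lemma norm_iterate_le_of_norm_map_le (hq₀ : 0 ≤ q) (hq₁ : q ≤ 1)
    (hf : ∀ x, ‖x‖ ≤ r → ‖f x‖ ≤ q * ‖x‖) {x : E} (hx : ‖x‖ ≤ r) (k : ℕ) :
    ‖f^[k] x‖ ≤ q ^ k * ‖x‖ := by
  induction k with
  | zero => simp
  | succ k ih =>
    have hk : ‖f^[k] x‖ ≤ r :=
      ih.trans <| (mul_le_of_le_one_left (norm_nonneg x) (pow_le_one₀ hq₀ hq₁)).trans hx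
    rw [Function.iterate_succ_apply', pow_succ', mul_assoc]
    exact (hf _ hk).trans (mul_le_mul_of_nonneg_left ih hq₀)

lemma isAsymptoticallyStableAtZero_of_norm_map_le (hr : 0 < r) (hq₀ : 0 ≤ q) (hq₁ : q < 1)
    (hf : ∀ x, ‖x‖ ≤ r → ‖f x‖ ≤ q * ‖x‖) : IsAsymptoticallyStableAtZero f := by
  intro δ hδ
  refine ⟨min r δ, lt_min hr hδ, fun x hx => ⟨fun k => ?_, ?_⟩⟩
  · have hx_le : ‖x‖ ≤ r := hx.le.trans (min_le_left r δ)
    calc ‖f^[k] x‖ ≤ q ^ k * ‖x‖ := norm_iterate_le_of_norm_map_le hq₀ hq₁.le hf hx_le k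
      _ ≤ ‖x‖ := mul_le_of_le_one_left (norm_nonneg x) (pow_le_one₀ hq₀ hq₁.le)
      _ < δ := hx.trans_le (min_le_right r δ)
  · refine squeeze_zero_norm
      (norm_iterate_le_of_norm_map_le hq₀ hq₁.le hf (hx.le.trans (min_le_left r δ))) ?_
    simpa using (tendsto_pow_atTop_nhds_zero_of_lt_one hq₀ hq₁).mul_const ‖x‖

end Contraction

lemma Real.abs_sign_le_one (x : ℝ) : |Real.sign x| ≤ 1 := by
  rcases Real.sign_apply_eq x with h | h | h <;> simp [h]

lemma Real.rpow_le_rpow_sub_one_mul {t r a : ℝ} (ht : 0 ≤ t) (htr : t ≤ r) (ha : 1 ≤ a) :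
    t ^ a ≤ r ^ (a - 1) * t := by
  calc t ^ a = t ^ (a - 1) * t := by
        rw [← Real.rpow_add_one' ht (by linarith), sub_add_cancel]
    _ ≤ r ^ (a - 1) * t := by gcongr

lemma Real.exists_pos_const_mul_rpow_add_const_mul_rpow_lt {a b : ℝ} (ha : 0 < a) (hb : 0 < b)
    (c d : ℝ) {η : ℝ} (hη : 0 < η) : ∃ r > 0, c * r ^ a + d * r ^ b < η := by
  have hlim : Tendsto (fun t : ℝ => c * t ^ a + d * t ^ b) (𝓝 0) (𝓝 0) := by
    have hcont := ((Real.continuousAt_rpow_const 0 a (.inr ha.le)).tendsto.const_mul c).add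
      ((Real.continuousAt_rpow_const 0 b (.inr hb.le)).tendsto.const_mul d)
    simpa [Real.zero_rpow ha.ne', Real.zero_rpow hb.ne'] using hcont
  exact ((eventually_mem_nhdsWithin : ∀ᶠ t in 𝓝[Set.Ioi 0] (0 : ℝ), t ∈ Set.Ioi 0).and
    (nhdsWithin_le_nhds (hlim.eventually (gt_mem_nhds hη)))).exists

lemma norm_apply_le_mul_norm {A C a₁ b : ℝ} {g : ℝ × ℝ × ℝ → ℝ × ℝ × ℝ} (ha₁ : 1 ≤ a₁) (hb : 0 ≤ b)
    (hg : ∀ w u v : ℝ, g (w, u, v) =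
      (A * Real.sign w * |w| ^ a₁ + |w| ^ b * u, C * u * |w| ^ b, C * v * |w| ^ b))
    {r : ℝ} (x : ℝ × ℝ × ℝ) (hx : ‖x‖ ≤ r) :
    ‖g x‖ ≤ (|A| * r ^ (a₁ - 1) + (1 + |C|) * r ^ b) * ‖x‖ := by
  obtain ⟨w, u, v⟩ := x
  set n := ‖((w, u, v) : ℝ × ℝ × ℝ)‖
  have hw : |w| ≤ n := norm_fst_le ((w, u, v) : ℝ × ℝ × ℝ)
  have hu : |u| ≤ n := (norm_fst_le (u, v)).trans (norm_snd_le ((w, u, v) : ℝ × ℝ × ℝ))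
  have hv : |v| ≤ n := (norm_snd_le (u, v)).trans (norm_snd_le ((w, u, v) : ℝ × ℝ × ℝ))
  have hn : 0 ≤ n := norm_nonneg _
  have hr : 0 ≤ r := hn.trans hx
  have hra : 0 ≤ r ^ (a₁ - 1) := Real.rpow_nonneg hr _
  have hrb : 0 ≤ r ^ b := Real.rpow_nonneg hr _
  have hwa : |w| ^ a₁ ≤ r ^ (a₁ - 1) * n :=
    (Real.rpow_le_rpow_sub_one_mul (abs_nonneg w) (hw.trans hx) ha₁).trans (by gcongr)
  have hwb : |w| ^ b ≤ r ^ b := by gcongr; exact hw.trans hx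
  have hCs : ∀ s, |s| ≤ n →
      ‖C * s * |w| ^ b‖ ≤ (|A| * r ^ (a₁ - 1) + (1 + |C|) * r ^ b) * n := by
    intro s hs
    rw [Real.norm_eq_abs, abs_mul, abs_mul, abs_of_nonneg (by positivity : (0 : ℝ) ≤ |w| ^ b)]
    calc |C| * |s| * |w| ^ b ≤ |C| * n * r ^ b := by gcongr
      _ ≤ (|A| * r ^ (a₁ - 1) + (1 + |C|) * r ^ b) * n := by
        nlinarith [mul_nonneg (mul_nonneg (abs_nonneg A) hra) hn, mul_nonneg hrb hn]
  rw [hg, norm_prod_le_iff, norm_prod_le_iff]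
  refine ⟨?_, hCs u hu, hCs v hv⟩
  calc ‖A * Real.sign w * |w| ^ a₁ + |w| ^ b * u‖
      ≤ |A| * |w| ^ a₁ + |w| ^ b * |u| := by
        refine (abs_add_le _ _).trans (add_le_add ?_ ?_)
        · rw [abs_mul, abs_mul, abs_of_nonneg (by positivity : (0 : ℝ) ≤ |w| ^ a₁)]
          exact mul_le_mul_of_nonneg_right
            (mul_le_of_le_one_right (abs_nonneg A) (Real.abs_sign_le_one w)) (by positivity)
        · rw [abs_mul, abs_of_nonneg (by positivity : (0 : ℝ) ≤ |w| ^ b)]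
    _ ≤ |A| * (r ^ (a₁ - 1) * n) + r ^ b * n := by gcongr
    _ ≤ (|A| * r ^ (a₁ - 1) + (1 + |C|) * r ^ b) * n := by
        nlinarith [mul_nonneg (mul_nonneg (abs_nonneg C) hrb) hn]

theorem stmt5 (A C a₁ b : ℝ) (ha₁ : 1 < a₁) (hb : 0 < b)
    (g : ℝ × ℝ × ℝ → ℝ × ℝ × ℝ)
    (hg : ∀ w u v : ℝ, g (w, u, v) =
      (A * Real.sign w * |w| ^ a₁ + |w| ^ b * u, C * u * |w| ^ b, C * v * |w| ^ b)) :
    ∀ δ > 0, ∃ ε > 0, ∀ x : ℝ × ℝ × ℝ, ‖x‖ < ε →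
      (∀ k : ℕ, ‖g^[k] x‖ < δ) ∧
      Tendsto (fun k : ℕ => g^[k] x) atTop (nhds 0) := by
  obtain ⟨r, hr, hcontr⟩ := Real.exists_pos_const_mul_rpow_add_const_mul_rpow_lt
    (sub_pos.mpr ha₁) hb |A| (1 + |C|) (by norm_num : (0 : ℝ) < 1 / 2)
  exact isAsymptoticallyStableAtZero_of_norm_map_le hr (by norm_num) (by norm_num : (1 / 2 : ℝ) < 1)
    fun x hx => (norm_apply_le_mul_norm ha₁.le hb.le hg x hx).trans
      (mul_le_mul_of_nonneg_right hcontr.le (norm_nonneg x))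
end

section
/- Consider the map g: ℝ² → ℝ² given by g(w, z) = (c₁·sign(w)|w|^{a₁}, c₂·z·|w|^{a₂}) with c₁, c₂ ≠ 0, a₁ > 1 and a₂ > 0. Then the fixed point (0,0) is asymptotically stable. -/
open Filter

theorem stmt15 (c₁ c₂ a₁ a₂ : ℝ) (hc₁ : c₁ ≠ 0) (hc₂ : c₂ ≠ 0)
    (ha₁ : 1 < a₁) (ha₂ : 0 < a₂)
    (g : ℝ × ℝ → ℝ × ℝ)
    (hg : ∀ w z : ℝ, g (w, z) = (c₁ * Real.sign w * |w| ^ a₁, c₂ * z * |w| ^ a₂)) :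
    ∀ δ > 0, ∃ ε > 0, ∀ y : ℝ × ℝ, ‖y‖ < ε →
      (∀ k : ℕ, ‖g^[k] y‖ < δ) ∧
      Tendsto (fun k : ℕ => g^[k] y) atTop (nhds 0) := by
  intro δ hδ
  have hc₁' : (0:ℝ) < |c₁| := abs_pos.mpr hc₁
  have hc₂' : (0:ℝ) < |c₂| := abs_pos.mpr hc₂
  set E₁ : ℝ := ((2 * |c₁|)⁻¹) ^ (a₁ - 1)⁻¹ with hE₁def
  set E₂ : ℝ := ((2 * |c₂|)⁻¹) ^ a₂⁻¹ with hE₂def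
  have hE₁pos : 0 < E₁ := Real.rpow_pos_of_pos (by positivity) _
  have hE₂pos : 0 < E₂ := Real.rpow_pos_of_pos (by positivity) _
  set ε := min (δ/2) (min E₁ E₂) with hεdef
  have hεpos : 0 < ε := lt_min (by linarith) (lt_min hE₁pos hE₂pos)
  refine ⟨ε, hεpos, ?_⟩
  intro y hy
  -- bound for first coordinate factor
  have hb1 : ∀ x : ℝ, 0 ≤ x → x ≤ ε → |c₁| * x ^ a₁ ≤ x / 2 := by
    intro x hx0 hxε
    rcases eq_or_lt_of_le hx0 with h0 | h0
    · rw [← h0, Real.zero_rpow (by linarith : a₁ ≠ 0)]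
      simp
    · have hxE : x ≤ E₁ := le_trans hxε (le_trans (min_le_right _ _) (min_le_left _ _))
      have h1 : x ^ (a₁ - 1) ≤ E₁ ^ (a₁ - 1) :=
        Real.rpow_le_rpow hx0 hxE (by linarith)
      have h2 : E₁ ^ (a₁ - 1) = (2 * |c₁|)⁻¹ := by
        rw [hE₁def, ← Real.rpow_mul (by positivity), inv_mul_cancel₀ (by linarith : a₁ - 1 ≠ 0),
          Real.rpow_one]
      have h3 : |c₁| * x ^ (a₁ - 1) ≤ 1 / 2 := by
        calc |c₁| * x ^ (a₁ - 1) ≤ |c₁| * (2 * |c₁|)⁻¹ := by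
              rw [← h2]; exact mul_le_mul_of_nonneg_left h1 (le_of_lt hc₁')
          _ = 1 / 2 := by field_simp
      have h4 : x ^ a₁ = x ^ (a₁ - 1) * x := by
        rw [show a₁ = (a₁ - 1) + 1 by ring, Real.rpow_add h0, Real.rpow_one]; ring_nf
      rw [h4]
      calc |c₁| * (x ^ (a₁ - 1) * x) = (|c₁| * x ^ (a₁ - 1)) * x := by ring
        _ ≤ (1 / 2) * x := mul_le_mul_of_nonneg_right h3 (le_of_lt h0)
        _ = x / 2 := by ring
  have hb2 : ∀ x : ℝ, 0 ≤ x → x ≤ ε → |c₂| * x ^ a₂ ≤ 1 / 2 := by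
    intro x hx0 hxε
    have hxE : x ≤ E₂ := le_trans hxε (le_trans (min_le_right _ _) (min_le_right _ _))
    have h1 : x ^ a₂ ≤ E₂ ^ a₂ := Real.rpow_le_rpow hx0 hxE (le_of_lt ha₂)
    have h2 : E₂ ^ a₂ = (2 * |c₂|)⁻¹ := by
      rw [hE₂def, ← Real.rpow_mul (by positivity), inv_mul_cancel₀ (ne_of_gt ha₂),
        Real.rpow_one]
    calc |c₂| * x ^ a₂ ≤ |c₂| * (2 * |c₂|)⁻¹ := by
          rw [← h2]; exact mul_le_mul_of_nonneg_left h1 (le_of_lt hc₂')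
      _ = 1 / 2 := by field_simp
  -- key contraction
  have key : ∀ p : ℝ × ℝ, ‖p‖ ≤ ε → ‖g p‖ ≤ ‖p‖ / 2 := by
    intro p hp
    obtain ⟨w, z⟩ := p
    have hwn : ‖(w, z)‖ = max |w| |z| := by
      rw [Prod.norm_def, Real.norm_eq_abs, Real.norm_eq_abs]
    have hw : |w| ≤ ε := le_trans (le_max_left _ _) (hwn ▸ hp)
    have hz : |z| ≤ ε := le_trans (le_max_right _ _) (hwn ▸ hp)
    have hsign : |Real.sign w| ≤ 1 := by
      rcases lt_trichotomy w 0 with h | h | h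
      · simp [Real.sign_of_neg h]
      · simp [h]
      · simp [Real.sign_of_pos h]
    have hfst : |c₁ * Real.sign w * |w| ^ a₁| ≤ |w| / 2 := by
      have : |c₁ * Real.sign w * |w| ^ a₁| ≤ |c₁| * |w| ^ a₁ := by
        rw [abs_mul, abs_mul, abs_of_nonneg (Real.rpow_nonneg (abs_nonneg w) _)]
        calc |c₁| * |Real.sign w| * |w| ^ a₁
            ≤ |c₁| * 1 * |w| ^ a₁ := by
              apply mul_le_mul_of_nonneg_right _ (Real.rpow_nonneg (abs_nonneg w) _)
              exact mul_le_mul_of_nonneg_left hsign (abs_nonneg _)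
          _ = |c₁| * |w| ^ a₁ := by ring
      exact le_trans this (hb1 _ (abs_nonneg _) hw)
    have hsnd : |c₂ * z * |w| ^ a₂| ≤ |z| / 2 := by
      rw [abs_mul, abs_mul, abs_of_nonneg (Real.rpow_nonneg (abs_nonneg w) _)]
      calc |c₂| * |z| * |w| ^ a₂ = (|c₂| * |w| ^ a₂) * |z| := by ring
        _ ≤ (1 / 2) * |z| :=
            mul_le_mul_of_nonneg_right (hb2 _ (abs_nonneg _) hw) (abs_nonneg _)
        _ = |z| / 2 := by ring
    rw [hg, Prod.norm_def, Real.norm_eq_abs, Real.norm_eq_abs, hwn]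
    calc max |c₁ * Real.sign w * |w| ^ a₁| |c₂ * z * |w| ^ a₂|
        ≤ max (|w| / 2) (|z| / 2) := max_le_max hfst hsnd
      _ = max |w| |z| / 2 := by
          rw [max_div_div_right (by norm_num : (0:ℝ) ≤ 2)]
  -- iterates decay geometrically
  have hiter : ∀ k : ℕ, ‖g^[k] y‖ ≤ ‖y‖ * (1/2) ^ k := by
    intro k
    induction k with
    | zero => simp
    | succ k ih =>
      have hle1 : ((1:ℝ)/2) ^ k ≤ 1 := pow_le_one₀ (by norm_num) (by norm_num)
      have hεk : ‖g^[k] y‖ ≤ ε := by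
        calc ‖g^[k] y‖ ≤ ‖y‖ * (1/2) ^ k := ih
          _ ≤ ‖y‖ * 1 := mul_le_mul_of_nonneg_left hle1 (norm_nonneg _)
          _ = ‖y‖ := mul_one _
          _ ≤ ε := le_of_lt hy
      rw [Function.iterate_succ_apply']
      calc ‖g (g^[k] y)‖ ≤ ‖g^[k] y‖ / 2 := key _ hεk
        _ ≤ (‖y‖ * (1/2) ^ k) / 2 := by linarith
        _ = ‖y‖ * (1/2) ^ (k + 1) := by ring
  constructor
  · intro k
    have hle1 : ((1:ℝ)/2) ^ k ≤ 1 := pow_le_one₀ (by norm_num) (by norm_num)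
    have hεδ : ε ≤ δ / 2 := min_le_left _ _
    calc ‖g^[k] y‖ ≤ ‖y‖ * (1/2) ^ k := hiter k
      _ ≤ ‖y‖ * 1 := mul_le_mul_of_nonneg_left hle1 (norm_nonneg _)
      _ = ‖y‖ := mul_one _
      _ < ε := hy
      _ < δ := by linarith
  · rw [tendsto_zero_iff_norm_tendsto_zero]
    have hgeo : Tendsto (fun k : ℕ => ‖y‖ * (1/2) ^ k) atTop (nhds 0) := by
      have := (tendsto_pow_atTop_nhds_zero_of_lt_one (by norm_num : (0:ℝ) ≤ 1/2)
        (by norm_num : (1:ℝ)/2 < 1)).const_mul ‖y‖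
      simpa using this
    exact squeeze_zero (fun k => norm_nonneg _) hiter hgeo
end

section
/- Consider the map g: ℝ² → ℝ² given by g(w, z) = (c₁·z·|w|^{a₂}, c₂·sign(w)|w|^{a₁}) with c₁, c₂ ≠ 0. If a₂ < 0, then for every sufficiently small ε > 0 the set of points (w,z) with |w| ≠ 0 and |z| sufficiently close to but not equal to 0 whose forward orbit stays in the ε-ball and converges to (0,0) is contained in the union of countably many curves, hence has Lebesgue measure zero. -/
/-!
In logarithmic coordinates `u k = log |w_k|` an orbit with nonzero coordinates satisfies
`u (k + 2) = L + a₂ u (k + 1) + a₁ u k` with `L = log |c₁| + log |c₂|`, and an orbit that stays in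
the unit ball and tends to `0` has `u k < 0` and `u k → -∞`. As `a₂ < 0`, this gives
`u (k + 2) ≥ L + max a₁ 0 * u k`, so `u` is bounded below unless `a₁ > max 0 (1 + a₂)`. In that
case the characteristic roots satisfy `0 < λ₊ < -λ₋` and `λ₋ < -1`: the sequence
`u (k + 1) - λ₊ u k` is affine-geometric with ratio `λ₋`, yet it stays above
`u (k + 1) - λ₋ u k`, which grows strictly slower than `|λ₋| ^ k`. Hence its oscillating part
vanishes, which expresses `log |z₀|` as an affine function of `log |w₀|`. The orbit set therefore
lies in the union of the axes and a curve with finite vertical sections, a null set.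
-/

open Filter MeasureTheory

namespace Recurrence

variable {u : ℕ → ℝ}

lemma eq_affine_fixedPoint_add_pow_mul {μ L : ℝ} (hμ : μ ≠ 1) (hu : ∀ k, u (k + 1) = μ * u k + L)
    (k : ℕ) : u k = L / (1 - μ) + μ ^ k * (u 0 - L / (1 - μ)) := by
  have hfix : μ * (L / (1 - μ)) + L = L / (1 - μ) := by
    field_simp [sub_ne_zero.2 hμ.symm]
    ring
  induction k with
  | zero => simp
  | succ k ih => rw [hu, ih, pow_succ]; linear_combination hfix

lemma exists_abs_le_mul_pow_of_affine {l ν L : ℝ} (hlν : |l| < ν) (hν : 1 ≤ ν)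
    (hu : ∀ k, u (k + 1) = l * u k + L) : ∃ C, ∀ k, |u k| ≤ C * ν ^ k := by
  set D := |L| / (ν - |l|)
  have hgap : 0 < ν - |l| := sub_pos.2 hlν
  have hD : |L| = (ν - |l|) * D := by simp only [D]; field_simp
  have hD0 : 0 ≤ D := by positivity
  refine ⟨|u 0| + D, fun k => ?_⟩
  induction k with
  | zero => simpa using hD0
  | succ k ih =>
    have hνk : 1 ≤ ν ^ k := one_le_pow₀ hν
    calc |u (k + 1)| ≤ |l| * |u k| + |L| := by rw [hu, ← abs_mul]; exact abs_add_le _ _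
      _ ≤ |l| * ((|u 0| + D) * ν ^ k) + (ν - |l|) * ((|u 0| + D) * ν ^ k) := by
          rw [hD]
          gcongr
          nlinarith [abs_nonneg (u 0)]
      _ = (|u 0| + D) * ν ^ (k + 1) := by ring

lemma eq_zero_of_forall_neg_mul_pow_le {μ ν C c d : ℝ} (hμ : μ < -1) (hν : 0 ≤ ν) (hνμ : ν < -μ)
    (h : ∀ k : ℕ, -(C * ν ^ k) ≤ c + μ ^ k * d) : d = 0 := by
  by_contra hd
  -- pick the parity `b` along which `μ ^ k * d` is negative
  obtain ⟨b, he⟩ : ∃ b : ℕ, μ ^ b * d < 0 := by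
    rcases Ne.lt_or_gt hd with hd | hd
    · exact ⟨0, by simpa using hd⟩
    · exact ⟨1, by simpa using mul_neg_of_neg_of_pos (by linarith) hd⟩
  have hμ2 : 1 < μ ^ 2 := by nlinarith
  have hνμ2 : ν ^ 2 < μ ^ 2 := by nlinarith
  have hle : ∀ m : ℕ, -(C * ν ^ b) * (ν ^ 2 / μ ^ 2) ^ m ≤ c * ((μ ^ 2)⁻¹) ^ m + μ ^ b * d := by
    intro m
    have hpos : 0 < (μ ^ 2) ^ m := by positivity
    refine le_of_mul_le_mul_right ?_ hpos
    have key := h (b + 2 * m)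
    rw [pow_add, pow_add, pow_mul, pow_mul] at key
    have hμ0 : μ ^ 2 ≠ 0 := by positivity
    have e1 : -(C * ν ^ b) * (ν ^ 2 / μ ^ 2) ^ m * (μ ^ 2) ^ m = -(C * (ν ^ b * (ν ^ 2) ^ m)) := by
      rw [div_pow]; field_simp
    have e2 : (c * ((μ ^ 2)⁻¹) ^ m + μ ^ b * d) * (μ ^ 2) ^ m = c + μ ^ b * (μ ^ 2) ^ m * d := by
      rw [inv_pow]; field_simp
    rw [e1, e2]
    exact key
  have hl : Tendsto (fun m : ℕ => -(C * ν ^ b) * (ν ^ 2 / μ ^ 2) ^ m) atTop (nhds 0) := by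
    simpa using (tendsto_pow_atTop_nhds_zero_of_lt_one (by positivity)
      ((div_lt_one (by positivity)).2 hνμ2)).const_mul (-(C * ν ^ b))
  have hr : Tendsto (fun m : ℕ => c * ((μ ^ 2)⁻¹) ^ m + μ ^ b * d) atTop (nhds (μ ^ b * d)) := by
    simpa using ((tendsto_pow_atTop_nhds_zero_of_lt_one (by positivity)
      (inv_lt_one_of_one_lt₀ hμ2)).const_mul c).add_const (μ ^ b * d)
  exact (le_of_tendsto_of_tendsto' hl hr hle).not_gt he

lemma bddBelow_range_of_le_two_step {β L : ℝ} (hβ0 : 0 ≤ β) (hβ1 : β < 1)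
    (hu : ∀ k, L + β * u k ≤ u (k + 2)) : BddBelow (Set.range u) := by
  set M := max (max (-u 0) (-u 1)) (|L| / (1 - β))
  have hL : |L| ≤ (1 - β) * M := by
    rw [← div_le_iff₀' (by linarith)]
    exact le_max_right _ _
  have hpair : ∀ k, -M ≤ u k ∧ -M ≤ u (k + 1) := by
    intro k
    induction k with
    | zero => exact ⟨by grind, by grind⟩
    | succ k ih =>
      refine ⟨ih.2, ?_⟩
      have := hu k
      nlinarith [neg_abs_le L, ih.1]
  exact ⟨-M, by rintro _ ⟨k, rfl⟩; exact (hpair k).1⟩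

lemma sub_mul_succ_eq_of_sq_eq {a b L l : ℝ} (hu : ∀ k, u (k + 2) = L + a * u (k + 1) + b * u k)
    (hl : l ^ 2 = a * l + b) (k : ℕ) :
    u (k + 2) - l * u (k + 1) = (a - l) * (u (k + 1) - l * u k) + L := by
  rw [hu]
  linear_combination (-u k) * hl

lemma sub_mul_eq_of_forall_neg {a b L : ℝ} (ha : a < 0) (hb₀ : 0 < b) (hb : 1 + a < b)
    (hu : ∀ k, u (k + 2) = L + a * u (k + 1) + b * u k) (hneg : ∀ k, u k < 0) :
    u 1 - (a + √(a ^ 2 + 4 * b)) / 2 * u 0 = L / (1 - (a - √(a ^ 2 + 4 * b)) / 2) := by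
  set r := √(a ^ 2 + 4 * b)
  have hr2 : r ^ 2 = a ^ 2 + 4 * b := Real.sq_sqrt (by positivity)
  have hr : 0 < r := Real.sqrt_pos.2 (by positivity)
  set lp := (a + r) / 2
  set lm := (a - r) / 2
  have hsum : lp + lm = a := by ring
  have hdiff : lp - lm = r := by ring
  have hlp : lp ^ 2 = a * lp + b := by linear_combination hr2 / 4
  have hlm : lm ^ 2 = a * lm + b := by linear_combination hr2 / 4
  have hlp₀ : 0 < lp := by
    have : -a < r := by nlinarith
    linarith
  have hlm₁ : lm < -1 := by
    have : 2 + a < r := by nlinarith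
    linarith
  have hlplm : lp < -lm := by linarith
  set ν := (max 1 lp - lm) / 2
  have hmax : max 1 lp < -lm := max_lt (by linarith) hlplm
  obtain ⟨C, hC⟩ := exists_abs_le_mul_pow_of_affine (u := fun k => u (k + 1) - lm * u k)
    (l := a - lm) (ν := ν) (by rw [show a - lm = lp by ring, abs_of_pos hlp₀]; grind)
    (by grind) (sub_mul_succ_eq_of_sq_eq hu hlm)
  have ht := eq_affine_fixedPoint_add_pow_mul (u := fun k => u (k + 1) - lp * u k) (μ := a - lp)
    (by linarith) (sub_mul_succ_eq_of_sq_eq hu hlp)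
  rw [show a - lp = lm by ring] at ht
  simp only [zero_add] at ht
  suffices hd : u 1 - lp * u 0 - L / (1 - lm) = 0 by linarith
  refine eq_zero_of_forall_neg_mul_pow_le (ν := ν) (C := C) (c := L / (1 - lm)) hlm₁ (by grind)
    (by grind) fun k => ?_
  rw [← ht k]
  have : lp * u k < lm * u k := by nlinarith [hneg k]
  linarith [(abs_le.1 (hC k)).1]

theorem sub_mul_eq_of_forall_neg_of_tendsto_atBot {a b L : ℝ} (ha : a < 0)
    (hu : ∀ k, u (k + 2) = L + a * u (k + 1) + b * u k) (hneg : ∀ k, u k < 0)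
    (hlim : Tendsto u atTop atBot) :
    u 1 - (a + √(a ^ 2 + 4 * b)) / 2 * u 0 = L / (1 - (a - √(a ^ 2 + 4 * b)) / 2) := by
  by_cases hb : 0 < b ∧ 1 + a < b
  · exact sub_mul_eq_of_forall_neg ha hb.1 hb.2 hu hneg
  -- otherwise `b < 1`, and since `a * u (k + 1) > 0` the orbit is bounded below
  refine absurd (bddBelow_range_of_le_two_step (β := max b 0) (L := L) (le_max_right _ _) ?_
    fun k => ?_) (not_bddBelow_of_tendsto_atBot hlim)
  · refine max_lt ?_ one_pos
    rcases le_or_gt b 0 with hb₀ | hb₀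
    · linarith
    · linarith [not_and.1 hb hb₀]
  · rw [hu]
    nlinarith [hneg (k + 1), mul_le_mul_of_nonpos_right (le_max_left b 0) (hneg k).le]

end Recurrence

def IsSignedPowerMap (c₁ c₂ a₁ a₂ : ℝ) (g : ℝ × ℝ → ℝ × ℝ) : Prop :=
  ∀ w z : ℝ, g (w, z) = (c₁ * z * |w| ^ a₂, c₂ * Real.sign w * |w| ^ a₁)

namespace IsSignedPowerMap

variable {c₁ c₂ a₁ a₂ : ℝ} {g : ℝ × ℝ → ℝ × ℝ}

lemma abs_map_fst (hg : IsSignedPowerMap c₁ c₂ a₁ a₂ g) (p : ℝ × ℝ) :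
    |(g p).1| = |c₁| * |p.2| * |p.1| ^ a₂ := by
  rw [hg, abs_mul, abs_mul, abs_of_nonneg (Real.rpow_nonneg (abs_nonneg _) _)]

lemma abs_map_snd (hg : IsSignedPowerMap c₁ c₂ a₁ a₂ g) {p : ℝ × ℝ} (hp : p.1 ≠ 0) :
    |(g p).2| = |c₂| * |p.1| ^ a₁ := by
  have hsign : |Real.sign p.1| = 1 := by
    rcases Real.sign_apply_eq_of_ne_zero _ hp with h | h <;> simp [h]
  rw [hg, abs_mul, abs_mul, hsign, mul_one, abs_of_nonneg (Real.rpow_nonneg (abs_nonneg _) _)]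

lemma iterate_ne_zero (hg : IsSignedPowerMap c₁ c₂ a₁ a₂ g) (hc₁ : c₁ ≠ 0) (hc₂ : c₂ ≠ 0)
    {p : ℝ × ℝ} (hp₁ : p.1 ≠ 0) (hp₂ : p.2 ≠ 0) (k : ℕ) : (g^[k] p).1 ≠ 0 ∧ (g^[k] p).2 ≠ 0 := by
  induction k with
  | zero => exact ⟨hp₁, hp₂⟩
  | succ k ih =>
    rw [Function.iterate_succ_apply', ← abs_pos, ← abs_pos, hg.abs_map_fst, hg.abs_map_snd ih.1]
    have := abs_pos.2 ih.1
    exact ⟨by positivity [abs_pos.2 hc₁, abs_pos.2 ih.2], by positivity [abs_pos.2 hc₂]⟩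

lemma log_abs_map_fst (hg : IsSignedPowerMap c₁ c₂ a₁ a₂ g) (hc₁ : c₁ ≠ 0) {p : ℝ × ℝ}
    (hp₁ : p.1 ≠ 0) (hp₂ : p.2 ≠ 0) :
    Real.log |(g p).1| = Real.log |c₁| + Real.log |p.2| + a₂ * Real.log |p.1| := by
  have hw := abs_pos.2 hp₁
  rw [hg.abs_map_fst, Real.log_mul (by positivity) (by positivity),
    Real.log_mul (by positivity) (by positivity), Real.log_rpow hw]

lemma log_abs_map_snd (hg : IsSignedPowerMap c₁ c₂ a₁ a₂ g) (hc₂ : c₂ ≠ 0) {p : ℝ × ℝ}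
    (hp₁ : p.1 ≠ 0) :
    Real.log |(g p).2| = Real.log |c₂| + a₁ * Real.log |p.1| := by
  have hw := abs_pos.2 hp₁
  rw [hg.abs_map_snd hp₁, Real.log_mul (by positivity) (by positivity), Real.log_rpow hw]

lemma log_abs_iterate_fst_add_two (hg : IsSignedPowerMap c₁ c₂ a₁ a₂ g)
    (hc₁ : c₁ ≠ 0) (hc₂ : c₂ ≠ 0) {p : ℝ × ℝ} (hp₁ : p.1 ≠ 0) (hp₂ : p.2 ≠ 0) (k : ℕ) :
    Real.log |(g^[k + 2] p).1| = (Real.log |c₁| + Real.log |c₂|)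
      + a₂ * Real.log |(g^[k + 1] p).1| + a₁ * Real.log |(g^[k] p).1| := by
  have hk := hg.iterate_ne_zero hc₁ hc₂ hp₁ hp₂ k
  have hk₁ := hg.iterate_ne_zero hc₁ hc₂ hp₁ hp₂ (k + 1)
  rw [Function.iterate_succ_apply', hg.log_abs_map_fst hc₁ hk₁.1 hk₁.2,
    Function.iterate_succ_apply', hg.log_abs_map_snd hc₂ hk.1]
  ring

theorem log_abs_snd_eq_of_tendsto (hg : IsSignedPowerMap c₁ c₂ a₁ a₂ g) (hc₁ : c₁ ≠ 0)
    (hc₂ : c₂ ≠ 0) (ha₂ : a₂ < 0) {p : ℝ × ℝ} (hp₁ : p.1 ≠ 0) (hp₂ : p.2 ≠ 0)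
    (hball : ∀ k : ℕ, ‖g^[k] p‖ < 1) (hlim : Tendsto (fun k : ℕ => g^[k] p) atTop (nhds 0)) :
    Real.log |p.2| = (Real.log |c₁| + Real.log |c₂|) / (1 - (a₂ - √(a₂ ^ 2 + 4 * a₁)) / 2)
      - Real.log |c₁| - (a₂ - √(a₂ ^ 2 + 4 * a₁)) / 2 * Real.log |p.1| := by
  have hne := hg.iterate_ne_zero hc₁ hc₂ hp₁ hp₂
  have hneg (k : ℕ) : Real.log |(g^[k] p).1| < 0 :=
    Real.log_neg (abs_pos.2 (hne k).1) ((norm_fst_le _).trans_lt (hball k))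
  have hbot : Tendsto (fun k => Real.log |(g^[k] p).1|) atTop atBot := by
    simp only [Real.log_abs]
    exact Real.tendsto_log_nhdsNE_zero.comp (tendsto_nhdsWithin_iff.2
      ⟨by simpa using hlim.fst_nhds, Eventually.of_forall fun k => (hne k).1⟩)
  have key := Recurrence.sub_mul_eq_of_forall_neg_of_tendsto_atBot ha₂
    (hg.log_abs_iterate_fst_add_two hc₁ hc₂ hp₁ hp₂) hneg hbot
  have h₁ : Real.log |(g^[1] p).1| = Real.log |c₁| + Real.log |p.2| + a₂ * Real.log |p.1| :=
    hg.log_abs_map_fst hc₁ hp₁ hp₂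
  rw [h₁, Function.iterate_zero_apply] at key
  linear_combination key

end IsSignedPowerMap

lemma finite_setOf_log_abs_eq (c : ℝ) : {y : ℝ | Real.log |y| = c}.Finite := by
  refine (Set.toFinite {Real.exp c, -Real.exp c, 0}).subset fun y (hy : Real.log |y| = c) => ?_
  by_cases hy₀ : y = 0
  · simp [hy₀]
  · have : |y| = Real.exp c := by rw [← hy, Real.exp_log (abs_pos.2 hy₀)]
    rcases (abs_eq (Real.exp_pos c).le).1 this with h | h <;> simp [h]

lemma volume_setOf_log_abs_snd_eq {f : ℝ → ℝ} (hf : Measurable f) :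
    volume {q : ℝ × ℝ | Real.log |q.2| = f q.1} = 0 := by
  have hmeas : MeasurableSet {q : ℝ × ℝ | Real.log |q.2| = f q.1} :=
    measurableSet_eq_fun (by fun_prop) (hf.comp measurable_fst)
  rw [Measure.volume_eq_prod, Measure.measure_prod_null hmeas]
  exact Eventually.of_forall fun x => (finite_setOf_log_abs_eq (f x)).measure_zero volume

theorem stmt16 (c₁ c₂ a₁ a₂ : ℝ) (hc₁ : c₁ ≠ 0) (hc₂ : c₂ ≠ 0) (ha₂ : a₂ < 0)
    (g : ℝ × ℝ → ℝ × ℝ)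
    (hg : ∀ w z : ℝ, g (w, z) = (c₁ * z * |w| ^ a₂, c₂ * Real.sign w * |w| ^ a₁)) :
    ∃ δ > 0, volume {p : ℝ × ℝ |
      (∀ k : ℕ, ‖g^[k] p‖ < δ) ∧
      Tendsto (fun k : ℕ => g^[k] p) atTop (nhds 0)} = 0 := by
  set lm := (a₂ - √(a₂ ^ 2 + 4 * a₁)) / 2
  set A := (Real.log |c₁| + Real.log |c₂|) / (1 - lm) - Real.log |c₁|
  refine ⟨1, one_pos, measure_mono_null (t := ({0} ×ˢ Set.univ ∪ Set.univ ×ˢ {0}) ∪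
    {q | Real.log |q.2| = A - lm * Real.log |q.1|}) ?_ ?_⟩
  · rintro p ⟨hball, hlim⟩
    by_cases hp₁ : p.1 = 0
    · exact Or.inl (Or.inl ⟨hp₁, trivial⟩)
    by_cases hp₂ : p.2 = 0
    · exact Or.inl (Or.inr ⟨trivial, hp₂⟩)
    exact Or.inr (IsSignedPowerMap.log_abs_snd_eq_of_tendsto hg hc₁ hc₂ ha₂ hp₁ hp₂ hball hlim)
  · refine measure_union_null (measure_union_null ?_ ?_)
      (volume_setOf_log_abs_snd_eq (f := fun x => A - lm * Real.log |x|) (by fun_prop))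
    all_goals rw [Measure.volume_eq_prod, Measure.prod_prod]; simp
end
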